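/- For any W ∈ ℝ^{m×r} and f satisfying the standard assumption with strong convexity parameter μ and gradient Lipschitz constant L, α(W) ≥ √(μ/L) · β(W). -/

import Mathlib

noncomputable section

open scoped BigOperators

abbrev E (m : ℕ) := EuclideanSpace ℝ (Fin m)

def toE {m : ℕ} (x : Fin m → ℝ) : E m := WithLp.toLp 2 x

/-- The unit simplex `Δ = {y | y ≥ 0, ∑ y ≤ 1}`. -/
def simplex (n : Type*) [Fintype n] : Set (n → ℝ) :=
  {y | (∀ i, 0 ≤ y i) ∧ ∑ i, y i ≤ 1}

/-- Assumption 2 of the paper: `f` is `μ`-strongly convex with `L`-Lipschitz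
gradient `f'`, and `0` is its global minimizer with `f 0 = 0`. -/
structure GoodF {m : ℕ} (f : E m → ℝ) (f' : E m → E m) (μ L : ℝ) : Prop where
  mu_pos : 0 < μ
  grad : ∀ x, HasGradientAt f (f' x) x
  lip : ∀ x y : E m, ‖f' x - f' y‖ ≤ L * ‖x - y‖
  sconv : ∀ x y : E m, ∀ δ : ℝ, 0 ≤ δ → δ ≤ 1 →
    f (δ • x + (1 - δ) • y) ≤ δ * f x + (1 - δ) * f y - μ / 2 * δ * (1 - δ) * ‖x - y‖ ^ 2
  f_zero : f 0 = 0
  min_zero : ∀ x, f 0 ≤ f x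

/-- A minimizer over the unit simplex of `y ↦ f (x - B y)` (chosen via choice). -/
def argminSimplex {m : ℕ} {n : Type*} [Fintype n] (f : E m → ℝ)
    (B : Matrix (Fin m) n ℝ) (x : E m) : n → ℝ :=
  Classical.epsilon fun y => y ∈ simplex n ∧
    ∀ z ∈ simplex n, f (x - toE (B.mulVec y)) ≤ f (x - toE (B.mulVec z))

/-- The residual `R_B^f(x) = x - B y*` where `y* = argmin_{y ∈ Δ} f (x - B y)`. -/
def resid {m : ℕ} {n : Type*} [Fintype n] (f : E m → ℝ)
    (B : Matrix (Fin m) n ℝ) (x : E m) : E m :=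
  x - toE (B.mulVec (argminSimplex f B x))

/-- Column-wise residual matrix `R_B^f(A)`. -/
def residMat {m : ℕ} {n k : Type*} [Fintype n] (f : E m → ℝ)
    (B : Matrix (Fin m) n ℝ) (A : Matrix (Fin m) k ℝ) : Matrix (Fin m) k ℝ :=
  fun i j => resid f B (toE fun i' => A i' j) i

/-- `‖N‖_{1,2}`: the maximum `ℓ₂` column norm. -/
def norm12 {m : ℕ} {n : Type*} [Fintype n] (N : Matrix (Fin m) n ℝ) : ℝ :=
  sSup {c | ∃ j, c = ‖toE fun i => N i j‖}

/-- `α(W)`: minimum distance between a column of `W` and the convex hull of the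
other columns of `W` and the origin. -/
def alpha {m r : ℕ} (W : Matrix (Fin m) (Fin r) ℝ) : ℝ :=
  sInf {c | ∃ (j : Fin r) (x : Fin r → ℝ), x ∈ simplex (Fin r) ∧ x j = 0 ∧
    c = ‖toE (fun i => W i j) - toE (W.mulVec x)‖}

/-- `σ(W)`: smallest singular value (`min_{‖z‖₂ ≥ 1} ‖Wz‖₂`) if `m ≥ r`, and `0` if `m < r`. -/
def smin {m r : ℕ} (W : Matrix (Fin m) (Fin r) ℝ) : ℝ :=
  if r ≤ m then sInf {c | ∃ z : Fin r → ℝ, 1 ≤ ‖toE z‖ ∧ c = ‖toE (W.mulVec z)‖} else 0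

/-- `[B, x]`: append the column `x` to `B`. -/
def appendCol {m s : ℕ} (B : Matrix (Fin m) (Fin s) ℝ) (x : E m) :
    Matrix (Fin m) (Fin (s + 1)) ℝ :=
  fun i => Fin.snoc (fun j => B i j) (x i)

/-- `[A, B]`: horizontal concatenation. -/
def appendMat {m k s : ℕ} (A : Matrix (Fin m) (Fin k) ℝ) (B : Matrix (Fin m) (Fin s) ℝ) :
    Matrix (Fin m) (Fin (k + s)) ℝ :=
  fun i => Fin.append (fun j => A i j) (fun j => B i j)

/-- `ω(P) = min (min_i ‖p_i‖₂, (1/√2) min_{i ≠ j} ‖p_i - p_j‖₂)`. -/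
def omegaM {m : ℕ} {k : Type*} [Fintype k] (P : Matrix (Fin m) k ℝ) : ℝ :=
  sInf ({c | ∃ i, c = ‖toE fun a => P a i‖} ∪
    {c | ∃ i j, i ≠ j ∧ c = (Real.sqrt 2)⁻¹ * ‖(toE fun a => P a i) - toE fun a => P a j‖})

/-- `β(W) = min (ν_β(W), γ_β(W)/√2)` as in the paper. -/
def beta {m r : ℕ} (f : E m → ℝ) (W : Matrix (Fin m) (Fin r) ℝ) : ℝ :=
  sInf ({c | ∃ j : Fin r,
      c = ‖resid f (W.submatrix id fun p : {i // i ≠ j} => (p : Fin r)) (toE fun a => W a j)‖} ∪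
    {c | ∃ (i j : Fin r) (J : Finset (Fin r)), i ≠ j ∧ i ∉ J ∧ j ∉ J ∧
      c = (Real.sqrt 2)⁻¹ *
        ‖resid f (W.submatrix id fun p : J => (p : Fin r)) (toE fun a => W a i) -
         resid f (W.submatrix id fun p : J => (p : Fin r)) (toE fun a => W a j)‖})

theorem Matrix.isHermitian_transpose_mul_self {m n α : Type*} [Fintype m] [CommSemiring α]
    [StarRing α] [TrivialStar α] (A : Matrix m n α) : (Matrix.transpose A * A).IsHermitian := by
  simpa [Matrix.conjTranspose_eq_transpose_of_trivial] using Matrix.isHermitian_conjTranspose_mul_self A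

/-- Singular values of `B` in nonincreasing order (`i`-th largest at index `i`). -/
def singVals {m s : ℕ} (B : Matrix (Fin m) (Fin s) ℝ) : Fin s → ℝ := fun i =>
  Real.sqrt (((Matrix.isHermitian_transpose_mul_self B).eigenvalues ∘
    Tuple.sort (Matrix.isHermitian_transpose_mul_self B).eigenvalues) i.rev)

/-- The spectral norm `‖N‖₂` (ℓ₂ operator norm). -/
def spec {m s : ℕ} (N : Matrix (Fin m) (Fin s) ℝ) : ℝ :=
  ‖LinearMap.toContinuousLinearMap (Matrix.toEuclideanLin N)‖

/-!
Every point `W x` with `x ∈ Δ`, `x j = 0` is a feasible point of the problem defining the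
residual `R = R^f_{W(:,J)}(w_j)`, `J = {1,…,r} \ {j}`. Hence, by the quadratic bounds on `f`,
`μ/2 ‖R‖² ≤ f R ≤ f (w_j - W x) ≤ L/2 ‖w_j - W x‖²`, i.e. `√(μ/L) ‖R‖ ≤ ‖w_j - W x‖`, while
`β(W) ≤ ‖R‖`.
-/

open scoped RealInnerProductSpace

section Simplex

variable {n : Type*} [Fintype n]

lemma zero_mem_simplex : (0 : n → ℝ) ∈ simplex n :=
  ⟨fun _ => le_rfl, by simp⟩

lemma isClosed_simplex : IsClosed (simplex n) := by
  change IsClosed ({y : n → ℝ | ∀ i, 0 ≤ y i} ∩ {y | ∑ i, y i ≤ 1})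
  rw [Set.ofPred_forall]
  exact (isClosed_iInter fun i => isClosed_le continuous_const (continuous_apply i)).inter
    (isClosed_le (continuous_finsetSum _ fun i _ => continuous_apply i) continuous_const)

lemma isCompact_simplex : IsCompact (simplex n) := by
  refine (isCompact_univ_pi fun _ : n => isCompact_Icc (a := (0 : ℝ)) (b := 1)).of_isClosed_subset
    isClosed_simplex ?_
  rintro y ⟨hy₀, hy₁⟩ i -
  exact ⟨hy₀ i, (Finset.single_le_sum (fun k _ => hy₀ k) (Finset.mem_univ i)).trans hy₁⟩

variable {p : n → Prop} [DecidablePred p]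

lemma sum_subtype_eq_sum_filter_univ {M : Type*} [AddCommMonoid M] (g : n → M) :
    ∑ i : Subtype p, g i = ∑ i with p i, g i :=
  (Finset.sum_subtype _ (by simp) g).symm

lemma sum_subtype_eq_sum_of_forall_not {M : Type*} [AddCommMonoid M] {g : n → M}
    (hg : ∀ i, ¬p i → g i = 0) :
    ∑ i : Subtype p, g i = ∑ i, g i :=
  (sum_subtype_eq_sum_filter_univ g).trans
    (Finset.sum_filter_of_ne fun i _ hi => not_not.mp (mt (hg i) hi))

lemma restrict_mem_simplex {x : n → ℝ} (hx : x ∈ simplex n) :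
    (fun i : Subtype p => x i) ∈ simplex (Subtype p) := by
  refine ⟨fun i => hx.1 i, le_trans ?_ hx.2⟩
  rw [sum_subtype_eq_sum_filter_univ]
  exact Finset.sum_le_sum_of_subset_of_nonneg (Finset.filter_subset _ _) fun i _ _ => hx.1 i

lemma mulVec_restrict {m R : Type*} [NonUnitalNonAssocSemiring R] (W : Matrix m n R)
    {x : n → R} (hx : ∀ i, ¬p i → x i = 0) :
    (W.submatrix id (Subtype.val : Subtype p → n)).mulVec (fun i => x i) = W.mulVec x := by
  ext a
  exact sum_subtype_eq_sum_of_forall_not (g := fun i => W a i * x i) fun i hi => by simp [hx i hi]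

end Simplex

section Residual

variable {m : ℕ} {n : Type*} [Fintype n] {f : E m → ℝ}

lemma argminSimplex_spec (hf : Continuous f) (B : Matrix (Fin m) n ℝ) (x : E m) :
    argminSimplex f B x ∈ simplex n ∧
      ∀ z ∈ simplex n, f (x - toE (B.mulVec (argminSimplex f B x))) ≤
        f (x - toE (B.mulVec z)) := by
  have hcont : Continuous fun y : n → ℝ => f (x - toE (B.mulVec y)) :=
    hf.comp (continuous_const.sub
      ((PiLp.continuous_toLp 2 _).comp (continuous_const.matrix_mulVec continuous_id)))
  obtain ⟨y, hy, hmin⟩ :=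
    isCompact_simplex.exists_isMinOn ⟨0, zero_mem_simplex⟩ hcont.continuousOn
  exact Classical.epsilon_spec (p := fun y => y ∈ simplex n ∧
    ∀ z ∈ simplex n, f (x - toE (B.mulVec y)) ≤ f (x - toE (B.mulVec z))) ⟨y, hy, hmin⟩

lemma apply_resid_le (hf : Continuous f) (B : Matrix (Fin m) n ℝ) (x : E m) {y : n → ℝ}
    (hy : y ∈ simplex n) : f (resid f B x) ≤ f (x - toE (B.mulVec y)) :=
  (argminSimplex_spec hf B x).2 y hy

end Residual

namespace GoodF

variable {m : ℕ} {μ L : ℝ} {f : E m → ℝ} {f' : E m → E m}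

lemma nonneg (hf : GoodF f f' μ L) (x : E m) : 0 ≤ f x :=
  hf.f_zero ▸ hf.min_zero x

lemma continuous (hf : GoodF f f' μ L) : Continuous f :=
  continuous_iff_continuousAt.mpr fun x => (hf.grad x).differentiableAt.continuousAt

lemma grad_zero (hf : GoodF f f' μ L) : f' 0 = 0 := by
  have h := IsLocalMin.hasFDerivAt_eq_zero (Filter.Eventually.of_forall hf.min_zero)
    (hf.grad 0).hasFDerivAt
  simpa using congrArg (InnerProductSpace.toDual ℝ (E m)).symm h

lemma quadratic_lower_bound (hf : GoodF f f' μ L) (x : E m) : μ / 2 * ‖x‖ ^ 2 ≤ f x := by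
  -- strong convexity between `x` and the minimizer `0`, then `δ → 0⁺`
  have hδ : ∀ δ ∈ Set.Ioo (0 : ℝ) 1, μ / 2 * (1 - δ) * ‖x‖ ^ 2 ≤ f x := by
    rintro δ ⟨hδ₀, hδ₁⟩
    have h := hf.sconv x 0 δ hδ₀.le hδ₁.le
    simp only [smul_zero, add_zero, hf.f_zero, mul_zero, sub_zero] at h
    have := hf.nonneg (δ • x)
    nlinarith
  have hlim : Filter.Tendsto (fun δ : ℝ => μ / 2 * (1 - δ) * ‖x‖ ^ 2) (nhdsWithin 0 (Set.Ioi 0))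
      (nhds (μ / 2 * ‖x‖ ^ 2)) := by
    have := ((by fun_prop : Continuous fun δ : ℝ => μ / 2 * (1 - δ) * ‖x‖ ^ 2).tendsto 0)
    simpa using this.mono_left nhdsWithin_le_nhds
  exact le_of_tendsto hlim (Filter.mem_of_superset (Ioo_mem_nhdsGT one_pos) hδ)

lemma inner_grad_smul_le (hf : GoodF f f' μ L) (y : E m) {t : ℝ} (ht : 0 ≤ t) :
    ⟪f' (t • y), y⟫ ≤ L * t * ‖y‖ ^ 2 :=
  calc ⟪f' (t • y), y⟫ = ⟪f' (t • y) - f' 0, y⟫ := by rw [hf.grad_zero, sub_zero]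
    _ ≤ ‖f' (t • y) - f' 0‖ * ‖y‖ := real_inner_le_norm _ _
    _ ≤ L * ‖t • y - 0‖ * ‖y‖ := by gcongr; exact hf.lip _ _
    _ = L * t * ‖y‖ ^ 2 := by rw [sub_zero, norm_smul, Real.norm_of_nonneg ht]; ring

lemma quadratic_upper_bound (hf : GoodF f f' μ L) (y : E m) : f y ≤ L / 2 * ‖y‖ ^ 2 := by
  -- `t ↦ f (t • y) - L / 2 * t ^ 2 * ‖y‖ ^ 2` vanishes at `0` and is antitone on `[0, 1]`
  set h : ℝ → ℝ := fun t => f (t • y) - L / 2 * t ^ 2 * ‖y‖ ^ 2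
  have hderiv : ∀ t, HasDerivAt h (⟪f' (t • y), y⟫ - L * t * ‖y‖ ^ 2) t := by
    intro t
    have hline : HasDerivAt (fun s : ℝ => s • y) y t := by
      simpa using (hasDerivAt_id t).smul_const y
    have hcomp : HasDerivAt (fun s : ℝ => f (s • y)) ⟪f' (t • y), y⟫ t := by
      have := (hf.grad (t • y)).hasFDerivAt.comp_hasDerivAt t hline
      rwa [InnerProductSpace.toDual_apply_apply] at this
    have hquad : HasDerivAt (fun s : ℝ => L / 2 * s ^ 2 * ‖y‖ ^ 2) (L * t * ‖y‖ ^ 2) t :=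
      (((hasDerivAt_pow 2 t).const_mul (L / 2)).mul_const (‖y‖ ^ 2)).congr_deriv (by ring)
    exact hcomp.sub hquad
  have hanti : AntitoneOn h (Set.Icc 0 1) := by
    refine antitoneOn_of_hasDerivWithinAt_nonpos (convex_Icc 0 1)
      (fun t _ => (hderiv t).continuousAt.continuousWithinAt)
      (fun t _ => (hderiv t).hasDerivWithinAt) fun t ht => ?_
    rw [interior_Icc] at ht
    linarith [hf.inner_grad_smul_le y ht.1.le]
  have h10 := hanti (Set.left_mem_Icc.mpr zero_le_one) (Set.right_mem_Icc.mpr zero_le_one)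
    zero_le_one
  simp only [h, one_smul, zero_smul, hf.f_zero, one_pow, zero_pow two_ne_zero] at h10
  linarith

end GoodF

lemma sqrt_div_mul_le_of_mul_sq_le {μ L a b : ℝ} (hμ : 0 ≤ μ) (ha : 0 ≤ a) (hb : 0 ≤ b)
    (h : μ * a ^ 2 ≤ L * b ^ 2) : √(μ / L) * a ≤ b := by
  have hsq : μ / L * a ^ 2 ≤ b ^ 2 := by
    rcases le_or_gt L 0 with hL | hL
    · exact (mul_nonpos_of_nonpos_of_nonneg (div_nonpos_of_nonneg_of_nonpos hμ hL)
        (sq_nonneg a)).trans (sq_nonneg b)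
    · rw [div_mul_eq_mul_div, div_le_iff₀ hL]
      linarith
  calc √(μ / L) * a = √(μ / L * a ^ 2) := by rw [Real.sqrt_mul' _ (sq_nonneg a), Real.sqrt_sq ha]
    _ ≤ √(b ^ 2) := Real.sqrt_le_sqrt hsq
    _ = b := Real.sqrt_sq hb

lemma GoodF.sqrt_div_mul_norm_resid_le {m : ℕ} {n : Type*} [Fintype n] {μ L : ℝ}
    {f : E m → ℝ} {f' : E m → E m} (hf : GoodF f f' μ L) (B : Matrix (Fin m) n ℝ) (x : E m)
    {y : n → ℝ} (hy : y ∈ simplex n) :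
    √(μ / L) * ‖resid f B x‖ ≤ ‖x - toE (B.mulVec y)‖ := by
  refine sqrt_div_mul_le_of_mul_sq_le hf.mu_pos.le (norm_nonneg _) (norm_nonneg _) ?_
  have := (hf.quadratic_lower_bound _).trans <|
    (apply_resid_le hf.continuous B x hy).trans (hf.quadratic_upper_bound _)
  linarith

lemma beta_le_norm_resid {m r : ℕ} (f : E m → ℝ) (W : Matrix (Fin m) (Fin r) ℝ) (j : Fin r) :
    beta f W ≤
      ‖resid f (W.submatrix id fun p : {i // i ≠ j} => (p : Fin r)) (toE fun a => W a j)‖ := by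
  refine csInf_le ⟨0, ?_⟩ (Or.inl ⟨j, rfl⟩)
  rintro c (⟨j, rfl⟩ | ⟨i, j, J, -, -, -, rfl⟩) <;> positivity

theorem stmt15 (m r : ℕ) (μ L : ℝ) (f : E m → ℝ) (f' : E m → E m) (hf : GoodF f f' μ L)
    (W : Matrix (Fin m) (Fin r) ℝ) :
    Real.sqrt (μ / L) * beta f W ≤ alpha W := by
  rcases isEmpty_or_nonempty (Fin r) with hr | ⟨⟨j₀⟩⟩
  · simp [alpha, beta]
  refine le_csInf ⟨_, j₀, 0, zero_mem_simplex, rfl, rfl⟩ ?_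
  rintro c ⟨j, x, hx, hxj, rfl⟩
  have hx_off : ∀ i, ¬i ≠ j → x i = 0 := fun i hi => not_not.mp hi ▸ hxj
  calc √(μ / L) * beta f W
      ≤ √(μ / L) * ‖resid f (W.submatrix id fun p : {i // i ≠ j} => (p : Fin r))
          (toE fun a => W a j)‖ := by gcongr; exact beta_le_norm_resid f W j
    _ ≤ _ := hf.sqrt_div_mul_norm_resid_le _ _ (restrict_mem_simplex hx)
    _ = _ := by rw [mulVec_restrict W hx_off]
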